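/- (Arcidiacono–Miller Lemma 1 under Type-I extreme value.) Let D be a finite nonempty set, v : D → ℝ, let μ be the standard Gumbel measure on ℝ, and define V = ∫ max_{d ∈ D} (v(d) + ε(d)) d(⊗_{d∈D} μ)(ε) and p(d) = exp(v(d)) / Σ_{d' ∈ D} exp(v(d')). Then for every d ∈ D, V = (γ − log p(d)) + v(d); that is, the difference between the integrated value and the choice-specific value v(d) equals ψ_d(p) = γ − log p(d), a function of the conditional choice probabilities alone. -/

import Mathlib

/-!
If `T` is a standard exponential variable then `-log T` is standard Gumbel: the substitution
`t = exp (-x)` turns the Gumbel density into `exp (-t)`. Hence `P(ε ≤ a) = exp (-exp (-a))`, and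
the Gumbel mean is `-∫ log t · exp (-t) dt = -Γ'(1) = γ`. For independent Gumbel shocks,
`P(max_d (v d + ε d) ≤ a) = ∏_d exp (-exp (v d - a)) = exp (-exp (log ∑_d exp (v d) - a))`,
so the maximum is Gumbel shifted by `log ∑_d exp (v d)` and
`V = log ∑_d exp (v d) + γ = v d - log (p d) + γ`.
-/

open MeasureTheory

/-- The standard Gumbel (Type-I extreme value) measure on ℝ: the measure with
density `x ↦ exp (-x - exp (-x))` with respect to Lebesgue measure. -/
noncomputable def gumbelMeasure : Measure ℝ :=
  MeasureTheory.volume.withDensity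
    (fun x => ENNReal.ofReal (Real.exp (-x - Real.exp (-x))))

section

open Real Set

variable {E : Type*} [NormedAddCommGroup E] [NormedSpace ℝ E]

lemma image_exp_neg_univ : (fun x => exp (-x)) '' univ = Ioi 0 := by
  rw [image_univ, ← range_exp]
  exact neg_surjective.range_comp exp

lemma hasDerivAt_exp_neg (x : ℝ) : HasDerivAt (fun x => exp (-x)) (-exp (-x)) x := by
  simpa using (hasDerivAt_neg x).exp

lemma injOn_exp_neg : InjOn (fun x => exp (-x)) univ :=
  fun _ _ _ _ h => neg_injective (exp_injective h)

lemma gumbelMeasure_eq_withDensity :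
    gumbelMeasure = volume.withDensity
      (fun x => ENNReal.ofReal (exp (-x) * exp (-exp (-x)))) := by
  simp_rw [← exp_add, ← sub_eq_add_neg]; rfl

lemma integrable_gumbelMeasure_iff {g : ℝ → E} :
    Integrable g gumbelMeasure ↔ IntegrableOn (fun t => exp (-t) • g (-log t)) (Ioi 0) := by
  rw [gumbelMeasure_eq_withDensity, integrable_withDensity_iff_integrable_smul' (by fun_prop)
    (by simp), ← image_exp_neg_univ, integrableOn_image_iff_integrableOn_abs_deriv_smul
    MeasurableSet.univ (fun x _ => (hasDerivAt_exp_neg x).hasDerivWithinAt) injOn_exp_neg,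
    integrableOn_univ]
  simp [smul_smul, (exp_pos _).le]

lemma integral_gumbelMeasure (g : ℝ → E) :
    ∫ x, g x ∂gumbelMeasure = ∫ t in Ioi 0, exp (-t) • g (-log t) := by
  rw [gumbelMeasure_eq_withDensity, integral_withDensity_eq_integral_toReal_smul (by fun_prop)
    (by simp), ← image_exp_neg_univ, integral_image_eq_integral_abs_deriv_smul
    MeasurableSet.univ (fun x _ => (hasDerivAt_exp_neg x).hasDerivWithinAt) injOn_exp_neg,
    setIntegral_univ]
  simp [smul_smul, (exp_pos _).le]

local instance isProbabilityMeasure_gumbelMeasure : IsProbabilityMeasure gumbelMeasure := by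
  have hone : Integrable (fun _ => (1 : ℝ)) gumbelMeasure :=
    integrable_gumbelMeasure_iff.2 (by simpa using integrableOn_exp_neg_Ioi 0)
  have := (integrable_const_iff.1 hone).resolve_left one_ne_zero
  have hmass := integral_gumbelMeasure (fun _ => (1 : ℝ))
  simp only [integral_const, smul_eq_mul, mul_one, integral_exp_neg_Ioi_zero] at hmass
  exact ⟨by rw [← ofReal_measureReal, hmass, ENNReal.ofReal_one]⟩

lemma gumbelMeasure_Iic (a : ℝ) : gumbelMeasure (Iic a) = ENNReal.ofReal (exp (-exp (-a))) := by
  have hind : EqOn (fun t => exp (-t) • (Iic a).indicator 1 (-log t))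
      ((Ici (exp (-a))).indicator fun t => exp (-t)) (Ioi 0) := by
    intro t ht
    have : -log t ≤ a ↔ exp (-a) ≤ t := by rw [neg_le, ← exp_le_exp, exp_log ht]
    by_cases h : exp (-a) ≤ t <;> simp [indicator, this, h]
  rw [← ofReal_measureReal, ← integral_indicator_one measurableSet_Iic, integral_gumbelMeasure,
    setIntegral_congr_fun measurableSet_Ioi hind, integral_indicator measurableSet_Ici,
    Measure.restrict_restrict measurableSet_Ici,
    inter_eq_left.2 (Ici_subset_Ioi.2 (exp_pos _)), integral_Ici_eq_integral_Ioi,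
    integral_exp_neg_Ioi]

open Filter Asymptotics in
lemma integrableOn_log_mul_exp_neg : IntegrableOn (fun t => log t * exp (-t)) (Ioi 0) := by
  have hmellin : MellinConvergent (fun t : ℝ => log t • (exp (-t) : ℂ)) 1 := by
    refine (mellin_hasDerivAt_of_isBigO_rpow (a := 1 + 1) (b := 0) ?_ ?_ (by norm_num) ?_
      (by norm_num)).1
    · exact (Continuous.continuousOn (by fun_prop)).locallyIntegrableOn measurableSet_Ioi
    · rw [← isBigO_norm_left]
      simp_rw [Complex.norm_real, isBigO_norm_left]
      simpa only [neg_one_mul] using (isLittleO_exp_neg_mul_rpow_atTop zero_lt_one _).isBigO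
    · simp_rw [neg_zero, rpow_zero]
      refine isBigO_const_of_tendsto (y := (1 : ℂ)) ?_ one_ne_zero
      simpa using ((by fun_prop : Continuous fun t : ℝ => (exp (-t) : ℂ)).tendsto 0).mono_left
        nhdsWithin_le_nhds
  refine IntegrableOn.congr_fun (Integrable.re hmellin) (fun t _ => ?_) measurableSet_Ioi
  simp [-Complex.ofReal_exp]

open Filter Topology in
lemma integral_log_mul_exp_neg : ∫ t in Ioi 0, log t * exp (-t) = -eulerMascheroniConstant := by
  have hGamma : Complex.Gamma =ᶠ[𝓝 1] Complex.GammaIntegral := by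
    filter_upwards [(Complex.continuous_re.isOpen_preimage _ isOpen_Ioi).mem_nhds
      (show (1 : ℂ) ∈ Complex.re ⁻¹' Ioi 0 by simp)] with s hs using Complex.Gamma_eq_integral hs
  have h := ((Complex.hasDerivAt_GammaIntegral (by simp)).congr_of_eventuallyEq hGamma).unique
    Complex.hasDerivAt_Gamma_one
  have hreal : ∫ t in Ioi (0 : ℝ), (t : ℂ) ^ ((1 : ℂ) - 1) * (log t * exp (-t))
      = ((∫ t in Ioi 0, log t * exp (-t) : ℝ) : ℂ) := by
    rw [← integral_complex_ofReal]
    refine setIntegral_congr_fun measurableSet_Ioi fun t _ => ?_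
    simp
  exact_mod_cast hreal ▸ h

lemma integrable_id_gumbelMeasure : Integrable (fun x => x) gumbelMeasure :=
  integrable_gumbelMeasure_iff.2 <| integrableOn_log_mul_exp_neg.neg.congr_fun
    (fun t _ => by simp [mul_comm]) measurableSet_Ioi

lemma integral_id_gumbelMeasure : ∫ x, x ∂gumbelMeasure = eulerMascheroniConstant := by
  simp_rw [integral_gumbelMeasure, smul_eq_mul, mul_neg, mul_comm (exp _), integral_neg,
    integral_log_mul_exp_neg, neg_neg]

section MaxUtility

variable {ι : Type*} [Fintype ι] [Nonempty ι]

def maxUtility (v ε : ι → ℝ) : ℝ := Finset.univ.sup' Finset.univ_nonempty fun i => v i + ε i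

lemma measurable_maxUtility (v : ι → ℝ) : Measurable (maxUtility v) := by
  convert Finset.measurable_sup' Finset.univ_nonempty
    (f := fun i (ε : ι → ℝ) => v i + ε i) (fun i _ => by fun_prop) using 1
  ext ε
  rw [maxUtility, Finset.sup'_apply]

lemma maxUtility_preimage_Iic (v : ι → ℝ) (a : ℝ) :
    maxUtility v ⁻¹' Iic a = univ.pi fun i => Iic (a - v i) := by
  ext ε
  simp [maxUtility, Finset.sup'_le_iff, Pi.le_def, le_sub_iff_add_le']

lemma map_maxUtility_pi_gumbelMeasure (v : ι → ℝ) :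
    (Measure.pi fun _ : ι => gumbelMeasure).map (maxUtility v)
      = gumbelMeasure.map (· + log (∑ i, exp (v i))) := by
  have hsum (a : ℝ) : ∑ i, -exp (-(a - v i)) = -exp (-(a - log (∑ i, exp (v i)))) := by
    simp_rw [neg_sub, exp_sub, exp_log (Finset.sum_pos (fun i _ => exp_pos (v i))
      Finset.univ_nonempty), Finset.sum_neg_distrib, Finset.sum_div]
  refine Measure.ext_of_Iic _ _ fun a => ?_
  rw [Measure.map_apply (measurable_maxUtility v) measurableSet_Iic, maxUtility_preimage_Iic,
    Measure.pi_pi, Measure.map_apply (measurable_add_const _) measurableSet_Iic,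
    preimage_add_const_Iic]
  simp_rw [gumbelMeasure_Iic]
  rw [← ENNReal.ofReal_prod_of_nonneg (fun i _ => (exp_pos _).le), ← exp_sum, hsum]

lemma integral_maxUtility_pi_gumbelMeasure (v : ι → ℝ) :
    ∫ ε, maxUtility v ε ∂(Measure.pi fun _ : ι => gumbelMeasure)
      = log (∑ i, exp (v i)) + eulerMascheroniConstant := by
  set c := log (∑ i, exp (v i))
  calc ∫ ε, maxUtility v ε ∂(Measure.pi fun _ : ι => gumbelMeasure)
      = ∫ x, x ∂((Measure.pi fun _ : ι => gumbelMeasure).map (maxUtility v)) :=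
        (integral_map (measurable_maxUtility v).aemeasurable aestronglyMeasurable_id).symm
    _ = ∫ x, (x + c) ∂gumbelMeasure := by
        rw [map_maxUtility_pi_gumbelMeasure]
        exact integral_map (measurable_add_const _).aemeasurable aestronglyMeasurable_id
    _ = c + eulerMascheroniConstant := by
        rw [integral_add integrable_id_gumbelMeasure (integrable_const c),
          integral_id_gumbelMeasure, integral_const, probReal_univ, one_smul, add_comm]

end MaxUtility

end

/-- Arcidiacono–Miller Lemma 1 under Type-I extreme value shocks: the difference
between the integrated value `V` and the choice-specific value `v d` equals
`ψ_d(p) = γ - log (p d)`, a function of the conditional choice probabilities alone. -/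
theorem arcidiacono_miller_lemma1_T1EV {D : Type*} [Fintype D] [Nonempty D]
    (v : D → ℝ) (V : ℝ)
    (hV : V = ∫ ε : D → ℝ, (Finset.univ.sup' Finset.univ_nonempty fun d => v d + ε d)
        ∂(Measure.pi fun _ : D => gumbelMeasure))
    (p : D → ℝ)
    (hp : ∀ d : D, p d = Real.exp (v d) / ∑ d' : D, Real.exp (v d')) :
    ∀ d : D, V = (Real.eulerMascheroniConstant - Real.log (p d)) + v d := by
  intro d
  have hsum_pos : 0 < ∑ d', Real.exp (v d') :=
    Finset.sum_pos (fun _ _ => Real.exp_pos _) Finset.univ_nonempty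
  rw [hV.trans (integral_maxUtility_pi_gumbelMeasure v), hp,
    Real.log_div (Real.exp_ne_zero _) hsum_pos.ne', Real.log_exp]
  ring
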